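/- arXiv:math/9907119 — 3 statements merged into one kernel-verified Lean document; each statement's English description precedes it below -/
import Mathlib

section
/- If G and H are circulant graphs on m and n vertices respectively with gcd(m,n) = 1, then the tensor product G ⊗ H is a circulant graph. -/
open SimpleGraph

/-- A graph is circulant iff its automorphism group contains a transitive cyclic subgroup,
i.e. some automorphism whose iterates act transitively on the vertices. -/
def SimpleGraph.IsCirculant {V : Type*} (G : SimpleGraph V) : Prop :=
  ∃ φ : G ≃g G, ∀ v w : V, ∃ k : ℕ, (φ.toEquiv ^ k) v = w

/-- The tensor (categorical/Kronecker) product of simple graphs. -/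
def SimpleGraph.tensor {α β : Type*} (G : SimpleGraph α) (H : SimpleGraph β) :
    SimpleGraph (α × β) where
  Adj x y := G.Adj x.1 y.1 ∧ H.Adj x.2 y.2
  symm := ⟨fun _ _ h => ⟨G.symm.symm _ _ h.1, H.symm.symm _ _ h.2⟩⟩
  loopless := ⟨fun x h => G.loopless.irrefl x.1 h.1⟩

/-!
If `φ` and `ψ` generate transitive cyclic groups of automorphisms of `G` and `H`, then `φ × ψ`
is an automorphism of `G ⊗ H`. The orbit of a vertex under `φ` is all `m` vertices of `G`, so
`φ^k v` depends only on `k mod m`, and likewise for `ψ` modulo `n`. Given targets reached by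
`φ^k₁` and `ψ^k₂`, the Chinese remainder theorem gives one `k` with `k ≡ k₁ [MOD m]` and
`k ≡ k₂ [MOD n]`, so `(φ × ψ)^k` reaches the target pair.
-/

namespace Equiv.Perm

variable {α β : Type*}

theorem minimalPeriod_eq_card_of_forall_exists_pow_apply_eq [Fintype α] {e : Perm α} {v : α}
    (h : ∀ w, ∃ k : ℕ, (e ^ k) v = w) :
    Function.minimalPeriod e v = Fintype.card α := by
  classical
  have horbit : ∀ w, w ∈ MulAction.orbit (Subgroup.zpowers e) v := fun w => by
    obtain ⟨k, rfl⟩ := h w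
    exact ⟨⟨e ^ k, Subgroup.npow_mem_zpowers e k⟩, rfl⟩
  rw [← Fintype.card_congr (Equiv.subtypeUnivEquiv horbit)]
  exact MulAction.minimalPeriod_eq_card (a := e) (b := v)

theorem pow_apply_eq_pow_apply_of_modEq_card [Fintype α] {e : Perm α} {v : α}
    (h : ∀ w, ∃ k : ℕ, (e ^ k) v = w) {k l : ℕ} (hkl : k ≡ l [MOD Fintype.card α]) :
    (e ^ k) v = (e ^ l) v := by
  rw [← iterate_eq_pow, ← iterate_eq_pow, ← Function.iterate_mod_minimalPeriod_eq,
    ← Function.iterate_mod_minimalPeriod_eq (n := l),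
    minimalPeriod_eq_card_of_forall_exists_pow_apply_eq h, hkl]

theorem prodCongr_pow_apply (e : Perm α) (f : Perm β) (n : ℕ) (x : α × β) :
    (prodCongr e f ^ n) x = ((e ^ n) x.1, (f ^ n) x.2) := by
  rw [← iterate_eq_pow, prodCongr_apply, Prod.map_iterate]
  rfl

theorem prodCongr_forall_exists_pow_apply_eq [Fintype α] [Fintype β] {e : Perm α} {f : Perm β}
    (hcop : Nat.Coprime (Fintype.card α) (Fintype.card β))
    (he : ∀ v w, ∃ k : ℕ, (e ^ k) v = w) (hf : ∀ v w, ∃ k : ℕ, (f ^ k) v = w)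
    (x y : α × β) : ∃ k : ℕ, (prodCongr e f ^ k) x = y := by
  obtain ⟨k₁, hk₁⟩ := he x.1 y.1
  obtain ⟨k₂, hk₂⟩ := hf x.2 y.2
  obtain ⟨k, hk₁k, hk₂k⟩ := Nat.chineseRemainder hcop k₁ k₂
  refine ⟨k, ?_⟩
  rw [prodCongr_pow_apply, pow_apply_eq_pow_apply_of_modEq_card (he x.1) hk₁k,
    pow_apply_eq_pow_apply_of_modEq_card (hf x.2) hk₂k, hk₁, hk₂]

end Equiv.Perm

namespace SimpleGraph.Iso

variable {α α' β β' : Type*} {G : SimpleGraph α} {G' : SimpleGraph α'}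
  {H : SimpleGraph β} {H' : SimpleGraph β'}

def tensor (φ : G ≃g G') (ψ : H ≃g H') : G.tensor H ≃g G'.tensor H' where
  toEquiv := φ.toEquiv.prodCongr ψ.toEquiv
  map_rel_iff' := and_congr φ.map_rel_iff ψ.map_rel_iff

end SimpleGraph.Iso

theorem stmt_0 {α β : Type*} [Fintype α] [Fintype β]
    (G : SimpleGraph α) (H : SimpleGraph β)
    (hcop : Nat.Coprime (Fintype.card α) (Fintype.card β))
    (hG : G.IsCirculant) (hH : H.IsCirculant) :
    (G.tensor H).IsCirculant := by
  obtain ⟨φ, hφ⟩ := hG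
  obtain ⟨ψ, hψ⟩ := hH
  exact ⟨φ.tensor ψ, Equiv.Perm.prodCongr_forall_exists_pow_apply_eq hcop hφ hψ⟩
end

section
/- If m ≥ 3, n ≥ 3, m ≠ n, and gcd(m,n) > 1, then the tensor product K_m ⊗ K_n is not a circulant graph. -/
/-! Two distinct vertices of `K_m ⊗ K_n` have `n`, `m` or `2` common non-neighbours (counting
the two vertices themselves) according as they share a row, share a column, or are adjacent.
Since `m ≠ n` and `m, n ≥ 3`, an automorphism therefore maps rows to rows and columns to columns,
so it is a product `σ × τ`. If `σ × τ` generates a transitive cyclic group, then `σ` and `τ` are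
full cycles of lengths `m` and `n`, so `(σ × τ) ^ lcm m n = 1`, while transitivity forces
`m * n ∣ lcm m n`, i.e. `gcd m n = 1`. -/

open SimpleGraph

theorem Nat.coprime_of_mul_dvd_lcm {m n : ℕ} (hm : 0 < m) (hn : 0 < n)
    (h : m * n ∣ Nat.lcm m n) : Nat.Coprime m n := by
  have hle := Nat.le_of_dvd (Nat.lcm_pos hm hn) h
  have hgcd := Nat.gcd_mul_lcm m n
  have := Nat.gcd_pos_of_pos_left n hm
  unfold Nat.Coprime
  nlinarith

namespace Equiv.Perm

variable {α β : Type*}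

theorem isCycleOn_univ_of_forall_exists_pow {f : Perm α}
    (h : ∀ x y, ∃ k : ℕ, (f ^ k) x = y) : f.IsCycleOn _root_.Set.univ :=
  ⟨_root_.Set.bijOn_univ.2 f.bijective, fun x _ y _ =>
    let ⟨k, hk⟩ := h x y; ⟨k, by rwa [zpow_natCast]⟩⟩

theorem pow_apply_eq_self_iff_card_dvd [Fintype α] {f : Perm α}
    (h : ∀ x y, ∃ k : ℕ, (f ^ k) x = y) (a : α) {k : ℕ} :
    (f ^ k) a = a ↔ Nat.card α ∣ k := by
  have hf : f.IsCycleOn (Finset.univ : Finset α) := by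
    rw [Finset.coe_univ]; exact isCycleOn_univ_of_forall_exists_pow h
  rw [hf.pow_apply_eq (Finset.mem_univ a), Finset.card_univ, Nat.card_eq_fintype_card]

theorem prodCongr_pow (σ : Perm α) (τ : Perm β) (k : ℕ) :
    σ.prodCongr τ ^ k = (σ ^ k).prodCongr (τ ^ k) := by
  induction k with
  | zero => rfl
  | succ k ih => ext x <;> simp [pow_succ', ih]

theorem coprime_card_of_forall_exists_pow_prodCongr [Fintype α] [Fintype β]
    [Nonempty α] [Nonempty β] {σ : Perm α} {τ : Perm β}
    (h : ∀ x y, ∃ k : ℕ, (σ.prodCongr τ ^ k) x = y) :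
    (Nat.card α).Coprime (Nat.card β) := by
  obtain ⟨a⟩ := ‹Nonempty α›
  obtain ⟨b⟩ := ‹Nonempty β›
  have hσ : ∀ x y, ∃ k : ℕ, (σ ^ k) x = y := fun x y =>
    let ⟨k, hk⟩ := h (x, b) (y, b); ⟨k, by rw [prodCongr_pow] at hk; exact congrArg Prod.fst hk⟩
  have hτ : ∀ x y, ∃ k : ℕ, (τ ^ k) x = y := fun x y =>
    let ⟨k, hk⟩ := h (a, x) (a, y); ⟨k, by rw [prodCongr_pow] at hk; exact congrArg Prod.snd hk⟩
  refine Nat.coprime_of_mul_dvd_lcm Nat.card_pos Nat.card_pos ?_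
  rw [← Nat.card_prod, ← pow_apply_eq_self_iff_card_dvd h (a, b), prodCongr_pow]
  exact Prod.ext ((pow_apply_eq_self_iff_card_dvd hσ a).2 (Nat.dvd_lcm_left _ _))
    ((pow_apply_eq_self_iff_card_dvd hτ b).2 (Nat.dvd_lcm_right _ _))

theorem exists_fst_apply_eq [Nonempty β] {φ : Perm (α × β)}
    (h : ∀ x y, (φ x).1 = (φ y).1 ↔ x.1 = y.1) : ∃ σ : Perm α, ∀ x, (φ x).1 = σ x.1 := by
  obtain ⟨b⟩ := ‹Nonempty β›
  have hσ : Function.Bijective fun a => (φ (a, b)).1 := by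
    refine ⟨fun a a' haa' => (h (a, b) (a', b)).1 haa', fun a => ⟨(φ.symm (a, b)).1, ?_⟩⟩
    dsimp only
    rw [(h ((φ.symm (a, b)).1, b) (φ.symm (a, b))).2 rfl, apply_symm_apply]
  exact ⟨Equiv.ofBijective _ hσ, fun x => (h x (x.1, b)).2 rfl⟩

theorem exists_eq_prodCongr [Nonempty α] [Nonempty β] {φ : Perm (α × β)}
    (h₁ : ∀ x y, (φ x).1 = (φ y).1 ↔ x.1 = y.1) (h₂ : ∀ x y, (φ x).2 = (φ y).2 ↔ x.2 = y.2) :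
    ∃ (σ : Perm α) (τ : Perm β), φ = σ.prodCongr τ := by
  obtain ⟨σ, hσ⟩ := exists_fst_apply_eq h₁
  obtain ⟨τ, hτ⟩ := exists_fst_apply_eq (φ := (prodComm α β).permCongr φ)
    fun x y => h₂ x.swap y.swap
  exact ⟨σ, τ, Equiv.ext fun x => Prod.ext (hσ x) (hτ x.swap)⟩

end Equiv.Perm

namespace SimpleGraph

variable {V W : Type*}

def commonNonNeighbors (G : SimpleGraph V) (v w : V) : Set V :=
  (G.neighborSet v ∪ G.neighborSet w)ᶜ

theorem Iso.ncard_commonNonNeighbors {G : SimpleGraph V} {H : SimpleGraph W} (φ : G ≃g H)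
    (v w : V) : (H.commonNonNeighbors (φ v) (φ w)).ncard = (G.commonNonNeighbors v w).ncard := by
  rw [← Set.ncard_preimage_of_injective_subset_range φ.injective (by simp)]
  congr 1
  ext z
  simp [commonNonNeighbors, φ.map_adj_iff]

variable {α β : Type*}

theorem tensor_top_commonNonNeighbors_of_fst_eq {x y : α × β} (h₁ : x.1 = y.1)
    (h₂ : x.2 ≠ y.2) :
    ((completeGraph α).tensor (completeGraph β)).commonNonNeighbors x y = {x.1} ×ˢ Set.univ := by
  ext z
  simp only [commonNonNeighbors, tensor, Set.mem_compl_iff, Set.mem_union, mem_neighborSet, top_adj]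
  grind

theorem tensor_top_commonNonNeighbors_of_snd_eq {x y : α × β} (h₁ : x.1 ≠ y.1)
    (h₂ : x.2 = y.2) :
    ((completeGraph α).tensor (completeGraph β)).commonNonNeighbors x y = Set.univ ×ˢ {x.2} := by
  ext z
  simp only [commonNonNeighbors, tensor, Set.mem_compl_iff, Set.mem_union, mem_neighborSet, top_adj]
  grind

theorem tensor_top_commonNonNeighbors_of_adj {x y : α × β} (h₁ : x.1 ≠ y.1)
    (h₂ : x.2 ≠ y.2) :
    ((completeGraph α).tensor (completeGraph β)).commonNonNeighbors x y =
      {(x.1, y.2), (y.1, x.2)} := by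
  ext z
  simp only [commonNonNeighbors, tensor, Set.mem_compl_iff, Set.mem_union, mem_neighborSet, top_adj]
  grind

theorem tensor_top_fst_eq_iff [Finite α] [Finite β] (hβ : 3 ≤ Nat.card β)
    (hαβ : Nat.card α ≠ Nat.card β) {x y : α × β} (hxy : x ≠ y) :
    x.1 = y.1 ↔
      (((completeGraph α).tensor (completeGraph β)).commonNonNeighbors x y).ncard = Nat.card β := by
  by_cases h₁ : x.1 = y.1
  · have h₂ : x.2 ≠ y.2 := fun h₂ => hxy (Prod.ext h₁ h₂)
    simp [h₁, tensor_top_commonNonNeighbors_of_fst_eq h₁ h₂, Set.ncard_prod]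
  by_cases h₂ : x.2 = y.2
  · simp [h₁, tensor_top_commonNonNeighbors_of_snd_eq h₁ h₂, Set.ncard_prod, hαβ]
  · rw [tensor_top_commonNonNeighbors_of_adj h₁ h₂, Set.ncard_pair (by simp [h₁])]
    simp only [h₁, false_iff]; omega

theorem tensor_top_snd_eq_iff [Finite α] [Finite β] (hα : 3 ≤ Nat.card α)
    (hαβ : Nat.card α ≠ Nat.card β) {x y : α × β} (hxy : x ≠ y) :
    x.2 = y.2 ↔
      (((completeGraph α).tensor (completeGraph β)).commonNonNeighbors x y).ncard = Nat.card α := by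
  by_cases h₂ : x.2 = y.2
  · have h₁ : x.1 ≠ y.1 := fun h₁ => hxy (Prod.ext h₁ h₂)
    simp [h₂, tensor_top_commonNonNeighbors_of_snd_eq h₁ h₂, Set.ncard_prod]
  by_cases h₁ : x.1 = y.1
  · simp [h₂, tensor_top_commonNonNeighbors_of_fst_eq h₁ h₂, Set.ncard_prod, Ne.symm hαβ]
  · rw [tensor_top_commonNonNeighbors_of_adj h₁ h₂, Set.ncard_pair (by simp [h₁])]
    simp only [h₂, false_iff]; omega

theorem Iso.tensor_top_fst_apply_eq_iff [Finite α] [Finite β] (hβ : 3 ≤ Nat.card β)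
    (hαβ : Nat.card α ≠ Nat.card β)
    (φ : (completeGraph α).tensor (completeGraph β) ≃g (completeGraph α).tensor (completeGraph β))
    (x y : α × β) : (φ x).1 = (φ y).1 ↔ x.1 = y.1 := by
  obtain rfl | hxy := eq_or_ne x y
  · exact iff_of_true rfl rfl
  rw [tensor_top_fst_eq_iff hβ hαβ hxy, tensor_top_fst_eq_iff hβ hαβ (φ.injective.ne hxy),
    φ.ncard_commonNonNeighbors]

theorem Iso.tensor_top_snd_apply_eq_iff [Finite α] [Finite β] (hα : 3 ≤ Nat.card α)
    (hαβ : Nat.card α ≠ Nat.card β)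
    (φ : (completeGraph α).tensor (completeGraph β) ≃g (completeGraph α).tensor (completeGraph β))
    (x y : α × β) : (φ x).2 = (φ y).2 ↔ x.2 = y.2 := by
  obtain rfl | hxy := eq_or_ne x y
  · exact iff_of_true rfl rfl
  rw [tensor_top_snd_eq_iff hα hαβ hxy, tensor_top_snd_eq_iff hα hαβ (φ.injective.ne hxy),
    φ.ncard_commonNonNeighbors]

end SimpleGraph

theorem stmt_6 (m n : ℕ) (hm : 3 ≤ m) (hn : 3 ≤ n) (hmn : m ≠ n)
    (hgcd : 1 < Nat.gcd m n) :
    ¬ ((completeGraph (Fin m)).tensor (completeGraph (Fin n))).IsCirculant := by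
  rintro ⟨φ, hφ⟩
  have : Nonempty (Fin m) := Fin.pos_iff_nonempty.1 (by omega)
  have : Nonempty (Fin n) := Fin.pos_iff_nonempty.1 (by omega)
  obtain ⟨σ, τ, hστ⟩ := Equiv.Perm.exists_eq_prodCongr (φ := φ.toEquiv)
    (φ.tensor_top_fst_apply_eq_iff (by simpa) (by simpa))
    (φ.tensor_top_snd_apply_eq_iff (by simpa) (by simpa))
  rw [hστ] at hφ
  have hcop := Equiv.Perm.coprime_card_of_forall_exists_pow_prodCongr hφ
  rw [Nat.card_fin, Nat.card_fin, Nat.Coprime] at hcop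
  omega
end

section
/- Let G be a circulant graph (possibly with loops) on m vertices and let K_n* denote the complete graph on n vertices with a loop at every vertex. Then K_n* ⊗ G is a circulant graph on nm vertices. -/
/-- Circulant for graphs possibly with loops (given as a symmetric adjacency relation):
some permutation preserving adjacency whose powers act transitively. -/
def Rel.IsCirculant {V : Type*} (R : V → V → Prop) : Prop :=
  ∃ φ : Equiv.Perm V, (∀ a b : V, R (φ a) (φ b) ↔ R a b) ∧
    ∀ v w : V, ∃ k : ℕ, (φ ^ k) v = w

/-- Tensor product of adjacency relations (loops allowed). -/
def Rel.tensor {α β : Type*} (R : α → α → Prop) (S : β → β → Prop) :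
    α × β → α × β → Prop :=
  fun p q => R p.1 q.1 ∧ S p.2 q.2

/-- The adjacency relation of `K_n^*`, the complete graph with a loop at every vertex. -/
def completeLooped (n : ℕ) : Fin n → Fin n → Prop := fun _ _ => True

/-!
The automorphism of a circulant `G` on `m` vertices whose powers act transitively identifies the
vertices with `ZMod m` so that it becomes `z ↦ z + 1`. Reduction `ZMod (n * m) → ZMod m` is a
surjective homomorphism with kernel of order `n`, so `ZMod (n * m) ≃ Fin n × ZMod m` with the
reduction as second coordinate. Since `K_n*` relates everything, `K_n* ⊗ G` is the pullback of `G`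
along the reduction, and that pullback is invariant under `z ↦ z + 1` on `ZMod (n * m)`.
-/

namespace Rel.IsCirculant

theorem of_isEmpty {V : Type*} [IsEmpty V] (R : V → V → Prop) : Rel.IsCirculant R :=
  ⟨1, fun a _ => isEmptyElim a, fun v _ => isEmptyElim v⟩

theorem of_equiv {V W : Type*} (g : V ≃ W) {S : W → W → Prop}
    (h : Rel.IsCirculant fun v v' => S (g v) (g v')) : Rel.IsCirculant S := by
  obtain ⟨φ, hφS, hφ⟩ := h
  refine ⟨g.permCongrHom φ, fun a b => ?_, fun v w => ?_⟩
  · simpa [Equiv.permCongrHom_coe, Equiv.permCongr_apply] using hφS (g.symm a) (g.symm b)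
  · obtain ⟨k, hk⟩ := hφ (g.symm v) (g.symm w)
    refine ⟨k, ?_⟩
    rw [← map_pow, Equiv.permCongrHom_coe, Equiv.permCongr_apply, hk, Equiv.apply_symm_apply]

theorem of_add_one_iff {N : ℕ} [NeZero N] {S : ZMod N → ZMod N → Prop}
    (h : ∀ x y, S (x + 1) (y + 1) ↔ S x y) : Rel.IsCirculant S :=
  ⟨Equiv.addRight 1, h, fun v w => ⟨(w - v).val, by simp [Equiv.nsmul_addRight]⟩⟩

end Rel.IsCirculant

open MulAction in
theorem Equiv.Perm.exists_zmod_equiv_of_forall_exists_pow_apply_eq {A : Type*} [Fintype A]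
    {φ : Equiv.Perm A} (hφ : ∀ v w : A, ∃ k : ℕ, (φ ^ k) v = w) (a : A) :
    ∃ e : ZMod (Fintype.card A) ≃ A, ∀ z, e (z + 1) = φ (e z) := by
  suffices ∃ p, ∃ e : ZMod p ≃ A, ∀ z, e (z + 1) = φ (e z) by
    obtain ⟨p, e, he⟩ := this
    obtain rfl : p = Fintype.card A := by
      rw [← Nat.card_eq_fintype_card, ← Nat.card_zmod p]
      exact Nat.card_congr e
    exact ⟨e, he⟩
  have horbit : ∀ b, b ∈ orbit (Subgroup.zpowers φ) a := fun b => by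
    obtain ⟨k, hk⟩ := hφ a b
    exact ⟨⟨φ ^ k, Subgroup.npow_mem_zpowers φ k⟩, hk⟩
  refine ⟨_, (orbitZPowersEquiv φ a).symm.trans (Equiv.subtypeUnivEquiv horbit), fun z => ?_⟩
  have hz : z + 1 = ((1 + z.cast : ℤ) : ZMod _) := by
    push_cast [ZMod.intCast_cast, ZMod.cast_id]; exact add_comm _ _
  simp only [Equiv.trans_apply, Equiv.subtypeUnivEquiv_apply]
  rw [hz, orbitZPowersEquiv_symm_apply', orbitZPowersEquiv_symm_apply, zpow_one_add, mul_smul]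
  rfl

noncomputable def AddMonoidHom.equivKerProdOfSurjective {G H : Type*} [AddGroup G] [AddGroup H]
    (f : G →+ H) (hf : Function.Surjective f) : G ≃ f.ker × H :=
  AddSubgroup.addGroupEquivQuotientProdAddSubgroup.trans <| (Equiv.prodComm _ _).trans <|
    Equiv.prodCongr (.refl _) (QuotientAddGroup.quotientKerEquivOfSurjective f hf).toEquiv

theorem ZMod.exists_equiv_fin_prod (n m : ℕ) [NeZero n] [NeZero m] :
    ∃ g : ZMod (n * m) ≃ Fin n × ZMod m,
      ∀ x, (g x).2 = ZMod.castHom (dvd_mul_left m n) (ZMod m) x := by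
  let f := (ZMod.castHom (dvd_mul_left m n) (ZMod m)).toAddMonoidHom
  let g := f.equivKerProdOfSurjective (ZMod.castHom_surjective (dvd_mul_left m n))
  have hker : Nat.card f.ker = n := by
    have := Nat.card_congr g
    rw [Nat.card_prod, Nat.card_zmod, Nat.card_zmod] at this
    exact (Nat.eq_of_mul_eq_mul_right (NeZero.pos m) this).symm
  exact ⟨g.trans (Equiv.prodCongr (Finite.equivFinOfCardEq hker) (.refl _)), fun _ => rfl⟩

theorem stmt_14_general {A : Type*} [Fintype A] (m n : ℕ) (hA : Fintype.card A = m)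
    (R : A → A → Prop) (hR : Rel.IsCirculant R) :
    Rel.IsCirculant (Rel.tensor (completeLooped n) R) ∧
      Fintype.card (Fin n × A) = n * m := by
  refine ⟨?_, by simp [hA]⟩
  subst hA
  cases isEmpty_or_nonempty (Fin n × A) with
  | inl _ => exact .of_isEmpty _
  | inr hne =>
    obtain ⟨i, a⟩ := hne.some
    have : Nonempty A := ⟨a⟩
    have : NeZero n := ⟨i.pos.ne'⟩
    have : NeZero (Fintype.card A) := ⟨Fintype.card_ne_zero⟩
    obtain ⟨φ, hφR, hφ⟩ := hR
    obtain ⟨e, he⟩ := Equiv.Perm.exists_zmod_equiv_of_forall_exists_pow_apply_eq hφ a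
    obtain ⟨g, hg⟩ := ZMod.exists_equiv_fin_prod n (Fintype.card A)
    refine .of_equiv (g.trans (Equiv.prodCongr (.refl _) e)) (.of_add_one_iff fun x y => ?_)
    simp [Rel.tensor, completeLooped, hg, he, hφR]

theorem stmt_14 {A : Type*} [Fintype A] (m n : ℕ) (hA : Fintype.card A = m)
    (R : A → A → Prop) (hsymm : Symmetric R) (hR : Rel.IsCirculant R) :
    Rel.IsCirculant (Rel.tensor (completeLooped n) R) ∧
      Fintype.card (Fin n × A) = n * m :=
  stmt_14_general m n hA R hR
end
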